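/- arXiv:1602.03867 — 6 statements merged into one kernel-verified Lean document; each statement's English description precedes it below -/
import Mathlib

section
/- In any lattice-ordered abelian group, if 0 ≤ x ≤ u, u ≥ 0, and inf(m·x, u + x) = u for a positive natural number m, then m·x = u. -/
/-!
Put `y := m • x - u`. Translating `m • x ⊓ (u + x) = u` by `-u` gives `y ⊓ x = 0`, and disjointness
from `x` propagates to all multiples of `x`, so `y ⊓ m • x = 0`. Since `u ≥ 0` we have `y ≤ m • x`,
hence `y = y ⊓ m • x = 0`.
-/

section LatticeOrderedGroup

variable {G : Type*} [Lattice G] [AddCommGroup G] [AddLeftMono G]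

lemma inf_add_le_inf_of_inf_eq_zero {a b c : G} (hc : 0 ≤ c) (hab : a ⊓ b = 0) :
    a ⊓ (b + c) ≤ a ⊓ c := by
  refine le_inf inf_le_left ?_
  calc a ⊓ (b + c) ≤ (a + c) ⊓ (b + c) := inf_le_inf_right _ (le_add_of_nonneg_right hc)
    _ = c := by rw [← inf_add, hab, zero_add]

lemma inf_nsmul_eq_zero_of_inf_eq_zero {a b : G} (ha : 0 ≤ a) (hb : 0 ≤ b) (hab : a ⊓ b = 0)
    (n : ℕ) : a ⊓ n • b = 0 := by
  induction n with
  | zero => rw [zero_nsmul, inf_eq_right.mpr ha]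
  | succ k ih =>
    refine le_antisymm ?_ (le_inf ha (nsmul_nonneg hb _))
    calc a ⊓ (k + 1) • b = a ⊓ (b + k • b) := by rw [succ_nsmul']
      _ ≤ a ⊓ k • b := inf_add_le_inf_of_inf_eq_zero (nsmul_nonneg hb k) hab
      _ = 0 := ih

end LatticeOrderedGroup

theorem lgroup_inf_smul_eq_unit_general {G : Type*} [Lattice G] [AddCommGroup G]
    [CovariantClass G G (· + ·) (· ≤ ·)]
    (u x : G) (hu : 0 ≤ u) (hx0 : 0 ≤ x)
    (m : ℕ) (h : (m • x) ⊓ (u + x) = u) : m • x = u := by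
  have hum : u ≤ m • x := h ▸ inf_le_left
  have hdisj : (m • x - u) ⊓ x = 0 := by
    rw [← add_sub_cancel_left u x, ← inf_sub, add_sub_cancel_left, h, sub_self]
  have hle : m • x - u ≤ m • x := sub_le_self _ hu
  have hzero : m • x - u = 0 := by
    rw [← inf_eq_left.mpr hle]
    exact inf_nsmul_eq_zero_of_inf_eq_zero (sub_nonneg.mpr hum) hx0 hdisj m
  exact sub_eq_zero.mp hzero

/-- In any lattice-ordered abelian group, if `0 ≤ x ≤ u`, `0 ≤ u`, and
`inf(m·x, u + x) = u` for a positive natural `m`, then `m·x = u`. -/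
theorem lgroup_inf_smul_eq_unit {G : Type*} [Lattice G] [AddCommGroup G]
    [CovariantClass G G (· + ·) (· ≤ ·)]
    (u x : G) (hu : 0 ≤ u) (hx0 : 0 ≤ x) (hxu : x ≤ u)
    (m : ℕ) (hm : 0 < m) (h : (m • x) ⊓ (u + x) = u) : m • x = u :=
  lgroup_inf_smul_eq_unit_general u x hu hx0 m h
end

section
/- Let x ∈ [0,1] in the standard MV-algebra on the real unit interval (with x ⊕ y = min(x+y,1) and ¬x = 1−x). If x is irrational, then there is no finite system of MV-algebraic term equations t(x, y₁,…,y_k) = 1 whose real solution set has x as its unique first coordinate; equivalently, for any MV-term t, the set t⁻¹(1) ⊆ [0,1]^{k+1} is a rational polyhedron, so if it consists of a single point then all coordinates of that point are rational. -/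
/-- MV-terms in `k` variables. -/
inductive MVTerm : ℕ → Type
  | var {k : ℕ} (i : Fin k) : MVTerm k
  | zero {k : ℕ} : MVTerm k
  | neg {k : ℕ} : MVTerm k → MVTerm k
  | oplus {k : ℕ} : MVTerm k → MVTerm k → MVTerm k

/-- Interpretation of MV-terms in the standard MV-algebra `[0,1] ⊆ ℝ`,
with `x ⊕ y = min(x+y,1)` and `¬x = 1−x`. -/
def MVTerm.eval : {k : ℕ} → MVTerm k → (Fin k → ℝ) → ℝ
  | _, .var i, v => v i
  | _, .zero, _ => 0
  | _, .neg t, v => 1 - t.eval v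
  | _, .oplus t s, v => min (t.eval v + s.eval v) 1

/-! If a coordinate `p i` of the unique solution were irrational, `1` and `p i` would be
`ℚ`-independent, so some additive `D : ℝ → ℝ` kills `1` but not `p i`. Moving `p` along
`s ↦ p + s • (D ∘ p)`, every MV-term value `a` moves along `a + s * D a` for small `s`, so `t`
stays equal to `1`, and coordinates `0`, `1` do not move while interior ones stay in `(0, 1)`:
a second solution. -/

open Filter Topology

theorem Irrational.exists_addMonoidHom_map_one_eq_zero {α : ℝ} (hα : Irrational α) :
    ∃ D : ℝ →+ ℝ, D 1 = 0 ∧ D α ≠ 0 := by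
  have hα_notMem : α ∉ Submodule.span ℚ {(1 : ℝ)} := by
    rw [Submodule.mem_span_singleton]
    rintro ⟨q, hq⟩
    exact hα ⟨q, by simpa using hq⟩
  obtain ⟨f, hfα, hf1⟩ := Submodule.exists_dual_map_eq_bot_of_notMem hα_notMem inferInstance
  refine ⟨((Algebra.linearMap ℚ ℝ).comp f).toAddMonoidHom, ?_, by simpa using hfα⟩
  have hf1 : f 1 = 0 := by
    simpa [hf1] using Submodule.mem_map_of_mem (f := f) (Submodule.mem_span_singleton_self 1)
  simp [hf1]

section Perturbation

variable {D : ℝ →+ ℝ}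

theorem tendsto_add_mul_nhds_zero (a c : ℝ) :
    Tendsto (fun s : ℝ => a + s * c) (𝓝 0) (𝓝 a) :=
  (by fun_prop : Continuous fun s : ℝ => a + s * c).tendsto' 0 a (by simp)

theorem eventually_min_add_mul_map (hD : D 1 = 0) (a : ℝ) :
    ∀ᶠ s in 𝓝 (0 : ℝ), min (a + s * D a) 1 = min a 1 + s * D (min a 1) := by
  rcases lt_trichotomy a 1 with ha | rfl | ha
  · filter_upwards [(tendsto_add_mul_nhds_zero a (D a)).eventually (gt_mem_nhds ha)] with s hs
    rw [min_eq_left hs.le, min_eq_left ha.le]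
  · simp [hD]
  · filter_upwards [(tendsto_add_mul_nhds_zero a (D a)).eventually (lt_mem_nhds ha)] with s hs
    rw [min_eq_right hs.le, min_eq_right ha.le, hD, mul_zero, add_zero]

theorem eventually_add_mul_map_mem_Icc (hD : D 1 = 0) {y : ℝ} (hy : y ∈ Set.Icc (0 : ℝ) 1) :
    ∀ᶠ s in 𝓝 (0 : ℝ), y + s * D y ∈ Set.Icc (0 : ℝ) 1 := by
  rcases eq_or_ne y 0 with rfl | hy0
  · simp
  rcases eq_or_ne y 1 with rfl | hy1
  · simp [hD]
  have hyIoo : y ∈ Set.Ioo (0 : ℝ) 1 :=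
    ⟨lt_of_le_of_ne hy.1 hy0.symm, lt_of_le_of_ne hy.2 hy1⟩
  filter_upwards [(tendsto_add_mul_nhds_zero y (D y)).eventually (isOpen_Ioo.mem_nhds hyIoo)]
    with s hs using Set.Ioo_subset_Icc_self hs

/-- Truncation at `1` is either inactive near `s = 0` or happens at the value `1`, which `D`
kills; so no term can leave the line `s ↦ t p + s * D (t p)`. -/
theorem MVTerm.eventually_eval_add_mul_map (hD : D 1 = 0) {k : ℕ} (t : MVTerm k)
    (p : Fin k → ℝ) :
    ∀ᶠ s in 𝓝 (0 : ℝ),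
      t.eval (fun i => p i + s * D (p i)) = t.eval p + s * D (t.eval p) := by
  induction t with
  | var i => simp [MVTerm.eval]
  | zero => simp [MVTerm.eval]
  | neg t ih =>
    filter_upwards [ih] with s hs
    simp only [MVTerm.eval, hs, map_sub, hD]
    ring
  | oplus t u iht ihu =>
    filter_upwards [iht, ihu, eventually_min_add_mul_map hD (t.eval p + u.eval p)]
      with s hst hsu hmin
    simp only [MVTerm.eval, hst, hsu, map_add] at hmin ⊢
    rw [← hmin]
    ring_nf

end Perturbation

theorem mvterm_singleton_solution_rational_general (k : ℕ) (t : MVTerm (k + 1))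
    (p : Fin (k + 1) → ℝ)
    (h : {v : Fin (k + 1) → ℝ | (∀ i, v i ∈ Set.Icc (0 : ℝ) 1) ∧ t.eval v = 1} = {p}) :
    ∀ i, ∃ q : ℚ, p i = (q : ℝ) := by
  have hp : p ∈ {v : Fin (k + 1) → ℝ | (∀ i, v i ∈ Set.Icc (0 : ℝ) 1) ∧ t.eval v = 1} := by
    rw [h]; rfl
  by_contra! ⟨i, hi⟩
  obtain ⟨D, hD1, hDi⟩ :=
    Irrational.exists_addMonoidHom_map_one_eq_zero (α := p i) fun ⟨q, hq⟩ => hi q hq.symm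
  have hsol : ∀ᶠ s in 𝓝 (0 : ℝ), (fun j => p j + s * D (p j)) ∈
      {v : Fin (k + 1) → ℝ | (∀ i, v i ∈ Set.Icc (0 : ℝ) 1) ∧ t.eval v = 1} := by
    filter_upwards [eventually_all.2 fun j => eventually_add_mul_map_mem_Icc hD1 (hp.1 j),
      t.eventually_eval_add_mul_map hD1 p] with s hcube heval
    exact ⟨hcube, by rw [heval, hp.2, hD1, mul_zero, add_zero]⟩
  obtain ⟨s, hs, hs0⟩ :=
    ((hsol.filter_mono nhdsWithin_le_nhds).and (self_mem_nhdsWithin (s := {0}ᶜ))).exists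
  rw [h, Set.mem_singleton_iff] at hs
  have : s * D (p i) = 0 := by simpa using congrFun hs i
  exact (mul_ne_zero hs0 hDi) this

/-- If the solution set in `[0,1]^{k+1}` of an MV-term equation `t = 1` consists of a
single point, then all the coordinates of that point are rational. -/
theorem mvterm_singleton_solution_rational (k : ℕ) (t : MVTerm (k + 1))
    (p : Fin (k + 1) → ℝ) (hp : ∀ i, p i ∈ Set.Icc (0 : ℝ) 1)
    (h : {v : Fin (k + 1) → ℝ | (∀ i, v i ∈ Set.Icc (0 : ℝ) 1) ∧ t.eval v = 1} = {p}) :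
    ∀ i, ∃ q : ℚ, p i = (q : ℝ) :=
  mvterm_singleton_solution_rational_general k t p h
end

section
/- Every subalgebra of ℚ ∩ [0,1] (with MV-operations x ⊕ y = min(x+y,1), ¬x = 1−x) that is finitely generated is finite, and is of the form {0, 1/n, 2/n, …, 1} for some positive integer n. -/
def qoplus (x y : ℚ) : ℚ := min (x + y) 1

def qneg (x : ℚ) : ℚ := 1 - x

def IsMVSubalgebra (A : Set ℚ) : Prop :=
  A ⊆ Set.Icc 0 1 ∧ 0 ∈ A ∧ (∀ x ∈ A, qneg x ∈ A) ∧ ∀ x ∈ A, ∀ y ∈ A, qoplus x y ∈ A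

/-!
Clearing the denominators of the generators puts them, hence the whole generated subalgebra `A`,
inside a finite chain `Sₘ`, so `A` is finite. A finite subalgebra has a least positive element `a`.
Since `A` is closed under `x ⊖ y = ¬(¬x ⊕ y)`, which is `x - y` for `y ≤ x`, division with
remainder by `a` shows that every element of `A`, in particular `1`, is a multiple of `a`;
so `a = 1/n` and `A = Sₙ`.
-/

def mvChain (m : ℕ) : Set ℚ := {q : ℚ | ∃ k : ℕ, k ≤ m ∧ q = (k : ℚ) / m}

theorem mvChain_finite (m : ℕ) : (mvChain m).Finite :=
  ((Set.finite_Iic m).image fun k : ℕ => (k : ℚ) / m).subset fun _ ⟨k, hk, hq⟩ => ⟨k, hk, hq.symm⟩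

theorem isMVSubalgebra_mvChain {m : ℕ} (hm : 0 < m) : IsMVSubalgebra (mvChain m) := by
  have hm' : (0 : ℚ) < m := by exact_mod_cast hm
  refine ⟨?_, ⟨0, by simp⟩, ?_, ?_⟩
  · rintro q ⟨k, hk, rfl⟩
    exact ⟨by positivity, (div_le_one hm').2 (by exact_mod_cast hk)⟩
  · rintro q ⟨k, hk, rfl⟩
    refine ⟨m - k, Nat.sub_le _ _, ?_⟩
    rw [qneg, Nat.cast_sub hk]
    field_simp
  · rintro x ⟨k, hk, rfl⟩ y ⟨j, hj, rfl⟩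
    refine ⟨min (k + j) m, min_le_right _ _, ?_⟩
    rw [qoplus, ← add_div, Nat.cast_min, Nat.cast_add, ← min_div_div_right hm'.le, div_self hm'.ne']

theorem mem_mvChain_of_den_dvd {q : ℚ} (hq : q ∈ Set.Icc (0 : ℚ) 1) {m : ℕ} (hm : m ≠ 0)
    (hdvd : q.den ∣ m) : q ∈ mvChain m := by
  obtain ⟨c, rfl⟩ := hdvd
  lift q.num to ℕ using Rat.num_nonneg.2 hq.1 with k hk
  have hqm : q * ((q.den * c : ℕ) : ℚ) = ((k * c : ℕ) : ℚ) := by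
    rw [Nat.cast_mul, ← mul_assoc, Rat.mul_den_eq_num, ← hk]
    push_cast
    rfl
  have hm' : (0 : ℚ) < ((q.den * c : ℕ) : ℚ) := by exact_mod_cast Nat.pos_of_ne_zero hm
  refine ⟨k * c, ?_, (eq_div_iff hm'.ne').2 hqm⟩
  have : ((k * c : ℕ) : ℚ) ≤ ((q.den * c : ℕ) : ℚ) := hqm ▸ mul_le_of_le_one_left hm'.le hq.2
  exact_mod_cast this

theorem subset_mvChain_prod_den {F : Finset ℚ} (hF : ↑F ⊆ Set.Icc (0 : ℚ) 1) :
    ↑F ⊆ mvChain (∏ q ∈ F, q.den) := fun _ hq =>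
  mem_mvChain_of_den_dvd (hF hq) (Finset.prod_ne_zero_iff.2 fun p _ => p.den_ne_zero)
    (Finset.dvd_prod_of_mem _ hq)

namespace IsMVSubalgebra

variable {A : Set ℚ}

theorem one_mem (hA : IsMVSubalgebra A) : (1 : ℚ) ∈ A := by
  simpa [qneg] using hA.2.2.1 0 hA.2.1

theorem sub_mem (hA : IsMVSubalgebra A) {x y : ℚ} (hx : x ∈ A) (hy : y ∈ A) (hyx : y ≤ x) :
    x - y ∈ A := by
  obtain ⟨-, -, hneg, hoplus⟩ := hA
  have h := hneg _ (hoplus _ (hneg x hx) y hy)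
  rwa [qneg, qoplus, qneg, min_eq_left (by linarith), sub_add, sub_sub_cancel] at h

theorem nat_mul_mem (hA : IsMVSubalgebra A) {a : ℚ} (ha : a ∈ A) :
    ∀ k : ℕ, (k : ℚ) * a ≤ 1 → (k : ℚ) * a ∈ A
  | 0, _ => by simpa using hA.2.1
  | k + 1, hk => by
    have ha0 : 0 ≤ a := (hA.1 ha).1
    have hk' : (k : ℚ) * a ≤ 1 := by push_cast at hk; linarith
    have h := hA.2.2.2 a ha _ (hA.nat_mul_mem ha k hk')
    rwa [qoplus, ← one_add_mul, add_comm, ← Nat.cast_succ, min_eq_left hk] at h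

theorem exists_eq_nat_mul_of_isLeast (hA : IsMVSubalgebra A) {a : ℚ}
    (ha : IsLeast {x ∈ A | 0 < x} a) {x : ℚ} (hx : x ∈ A) : ∃ k : ℕ, x = k * a := by
  have ha0 : 0 < a := ha.1.2
  set k := ⌊x / a⌋₊
  have hkx : (k : ℚ) * a ≤ x := (le_div_iff₀ ha0).1 (Nat.floor_le (div_nonneg (hA.1 hx).1 ha0.le))
  have hxk : x - k * a < a := by
    have := (div_lt_iff₀ ha0).1 (Nat.lt_floor_add_one (x / a))
    linarith
  refine ⟨k, le_antisymm ?_ hkx⟩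
  by_contra! hlt
  have hmem : x - k * a ∈ A := hA.sub_mem hx (hA.nat_mul_mem ha.1.1 k (hkx.trans (hA.1 hx).2)) hkx
  exact hxk.not_ge (ha.2 ⟨hmem, sub_pos.2 hlt⟩)

theorem eq_mvChain_of_isLeast (hA : IsMVSubalgebra A) {a : ℚ}
    (ha : IsLeast {x ∈ A | 0 < x} a) : ∃ n : ℕ, 0 < n ∧ A = mvChain n := by
  obtain ⟨n, hn⟩ := hA.exists_eq_nat_mul_of_isLeast ha hA.one_mem
  have hn0 : (0 : ℚ) < n := pos_of_mul_pos_left (hn ▸ one_pos) ha.1.2.le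
  have hmul : ∀ k : ℕ, (k : ℚ) * a = k / n := fun k => by
    rw [eq_div_iff hn0.ne', mul_assoc, mul_comm a, ← hn, mul_one]
  refine ⟨n, by exact_mod_cast hn0, Set.ext fun _ => ⟨fun hx => ?_, ?_⟩⟩
  · obtain ⟨k, rfl⟩ := hA.exists_eq_nat_mul_of_isLeast ha hx
    rw [hmul] at hx ⊢
    exact ⟨k, by exact_mod_cast (div_le_one hn0).1 (hA.1 hx).2, rfl⟩
  · rintro ⟨k, hk, rfl⟩
    rw [← hmul]
    exact hA.nat_mul_mem ha.1.1 k (hmul k ▸ (div_le_one hn0).2 (by exact_mod_cast hk))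

theorem eq_mvChain_of_finite (hA : IsMVSubalgebra A) (hfin : A.Finite) :
    ∃ n : ℕ, 0 < n ∧ A = mvChain n := by
  obtain ⟨a, ha⟩ := (hfin.subset (Set.sep_subset A (0 < ·))).isCompact.exists_isLeast
    ⟨1, hA.one_mem, one_pos⟩
  exact hA.eq_mvChain_of_isLeast ha

end IsMVSubalgebra

/-- Every finitely generated subalgebra of `ℚ ∩ [0,1]` is finite and of the form
`{0, 1/m, 2/m, …, 1}` for some positive integer `m`. -/
theorem finitely_generated_subalgebra_of_rationals (A : Set ℚ) (hA : IsMVSubalgebra A)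
    (F : Finset ℚ) (hFA : ↑F ⊆ A)
    (hgen : ∀ B : Set ℚ, IsMVSubalgebra B → ↑F ⊆ B → A ⊆ B) :
    A.Finite ∧ ∃ m : ℕ, 0 < m ∧ A = {q : ℚ | ∃ k : ℕ, k ≤ m ∧ q = (k : ℚ) / m} := by
  have hM : 0 < ∏ q ∈ F, q.den := Finset.prod_pos fun q _ => q.den_pos
  have hAM : A ⊆ mvChain (∏ q ∈ F, q.den) :=
    hgen _ (isMVSubalgebra_mvChain hM) (subset_mvChain_prod_den (hFA.trans hA.1))
  have hfin : A.Finite := (mvChain_finite _).subset hAM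
  exact ⟨hfin, hA.eq_mvChain_of_finite hfin⟩
end

section
/- In the finite chain Sₙ viewed as an MV-algebra, the element 1/n satisfies (n−1)·x = ¬x (where k·x denotes x ⊕ ⋯ ⊕ x, k times), and for any MV-algebra A and any element y ∈ A satisfying (n−1)·y = ¬y, there is a unique MV-algebra homomorphism f : Sₙ → A with f(1/n) = y. (That is, Sₙ is presented as an MV-algebra by the formula (n−1)x = ¬x.) -/
/-- An MV-algebra `(A, ⊕, ¬, 0)`. -/
class MV (A : Type*) where
  oplus : A → A → A
  neg : A → A
  zero : A
  oplus_assoc : ∀ x y z : A, oplus x (oplus y z) = oplus (oplus x y) z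
  oplus_comm : ∀ x y : A, oplus x y = oplus y x
  oplus_zero : ∀ x : A, oplus x zero = x
  neg_neg : ∀ x : A, neg (neg x) = x
  oplus_neg_zero : ∀ x : A, oplus x (neg zero) = neg zero
  luk : ∀ x y : A, oplus (neg (oplus (neg x) y)) y = oplus (neg (oplus (neg y) x)) x

namespace MV

variable {A : Type*} [MV A]

/-- `1 := ¬0`. -/
def one : A := neg zero

/-- MV-product `x ⊙ y := ¬(¬x ⊕ ¬y)`. -/
def odot (x y : A) : A := neg (oplus (neg x) (neg y))

/-- The natural order: `x ≤ y` iff `¬x ⊕ y = 1`. -/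
def le (x y : A) : Prop := oplus (neg x) y = one

/-- `k`-fold MV-sum `k·x = x ⊕ ⋯ ⊕ x`. -/
def smul : ℕ → A → A
  | 0, _ => zero
  | k + 1, x => oplus x (smul k x)

end MV

/-- `k`-fold MV-sum on `ℚ`. -/
def qsmul : ℕ → ℚ → ℚ
  | 0, _ => 0
  | k + 1, x => qoplus x (qsmul k x)


/-!
If `(n−1)·y = ¬y` then `n·y = y ⊕ ¬y = 1`, and a downward induction using Łukasiewicz's axiom
gives `k·y = ¬((n−k)·y)` for `k ≤ n`. Hence `k/n ↦ k·y` respects `¬` and the truncated sum,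
while any homomorphism sending `1/n` to `y` must send `k/n = (k−1)/n ⊕ 1/n` to `k·y`.
-/

namespace MV

variable {A : Type*} [MV A]

theorem zero_oplus (x : A) : oplus zero x = x := by
  rw [oplus_comm, oplus_zero]

theorem neg_one : neg (one : A) = zero := neg_neg zero

theorem oplus_one (x : A) : oplus x one = one := oplus_neg_zero x

theorem neg_oplus_self (x : A) : oplus (neg x) x = one := by
  simpa only [neg_one, zero_oplus, oplus_one] using luk (one (A := A)) x

theorem oplus_neg_oplus_of_neg_oplus_neg_eq_one {x b : A} (h : oplus (neg x) (neg b) = one) :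
    oplus x (neg (oplus x b)) = neg b := by
  have hluk := luk (neg b) x
  rw [neg_neg, h, neg_one, zero_oplus, oplus_comm b] at hluk
  rw [oplus_comm, hluk]

theorem smul_add (a b : ℕ) (y : A) : smul (a + b) y = oplus (smul a y) (smul b y) := by
  induction a with
  | zero => rw [Nat.zero_add, smul, zero_oplus]
  | succ a ih => rw [Nat.succ_add, smul, smul, ih, oplus_assoc]

theorem smul_one (y : A) : smul 1 y = y := oplus_zero y

section Generator

variable {n : ℕ} {y : A}

theorem smul_eq_one (hn : 0 < n) (hy : smul (n - 1) y = neg y) : smul n y = one := by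
  rw [← Nat.sub_add_cancel hn, Nat.add_comm, smul_add, smul_one, hy, oplus_comm, neg_oplus_self]

theorem smul_eq_one_of_le (hn : 0 < n) (hy : smul (n - 1) y = neg y) {m : ℕ} (hm : n ≤ m) :
    smul m y = one := by
  rw [← Nat.sub_add_cancel hm, smul_add, smul_eq_one hn hy, oplus_one]

theorem smul_eq_neg_smul_sub (hn : 0 < n) (hy : smul (n - 1) y = neg y) :
    ∀ k ≤ n, smul k y = neg (smul (n - k) y) := by
  intro k
  induction k with
  | zero => intro _; rw [Nat.sub_zero, smul_eq_one hn hy, neg_one]; rfl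
  | succ k ih =>
    intro hk
    set b := smul (n - (k + 1)) y
    -- `¬y = (n−1)·y = k·y ⊕ b`, so `¬y ⊕ ¬b = k·y ⊕ (b ⊕ ¬b) = 1`
    have hb : oplus (neg y) (neg b) = one := by
      rw [← hy, show n - 1 = k + (n - (k + 1)) by omega, smul_add, ← oplus_assoc,
        oplus_comm b, neg_oplus_self, oplus_one]
    have hsub : smul (n - k) y = oplus y b := by
      rw [show n - k = n - (k + 1) + 1 by omega]; rfl
    change oplus y (smul k y) = neg b
    rw [ih (by omega), hsub, oplus_neg_oplus_of_neg_oplus_neg_eq_one hb]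

theorem smul_min_add (hn : 0 < n) (hy : smul (n - 1) y = neg y) (a b : ℕ) :
    smul (min (a + b) n) y = oplus (smul a y) (smul b y) := by
  rw [← smul_add]
  rcases le_total (a + b) n with h | h
  · rw [min_eq_left h]
  · rw [min_eq_right h, smul_eq_one hn hy, smul_eq_one_of_le hn hy h]

theorem eq_smul_of_map_oplus {f : Fin (n + 1) → A} (hn : 0 < n)
    (h1 : f ⟨1, Nat.succ_lt_succ hn⟩ = y) (h0 : f 0 = zero)
    (hadd : ∀ k l : Fin (n + 1),
      f ⟨min (k.val + l.val) n, Nat.lt_succ_of_le (min_le_right _ _)⟩ = oplus (f k) (f l))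
    (k : Fin (n + 1)) : f k = smul k y := by
  obtain ⟨k, hk⟩ := k
  induction k with
  | zero => exact h0
  | succ k ih =>
    have hstep := hadd ⟨k, by omega⟩ ⟨1, by omega⟩
    simp only [show min (k + 1) n = k + 1 by omega] at hstep
    rw [hstep, ih (by omega), h1, oplus_comm]
    rfl

end Generator

end MV

theorem qsmul_eq_min {x : ℚ} (hx : 0 ≤ x) (k : ℕ) : qsmul k x = min (k * x) 1 := by
  induction k with
  | zero => simp [qsmul]
  | succ k ih =>
    rw [qsmul, ih, qoplus, add_min, min_assoc, min_eq_right (by linarith : (1 : ℚ) ≤ x + 1)]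
    push_cast; ring_nf

/-- `Sₙ` is presented by the formula `(n−1)x = ¬x`: the generator `1/n` of `Sₙ`
satisfies it, and for any MV-algebra `A` and `y ∈ A` with `(n−1)·y = ¬y` there is a
unique MV-algebra homomorphism `f : Sₙ → A` (given on `Sₙ = {k/n : 0 ≤ k ≤ n}` as a
function of the numerator `k`) with `f(1/n) = y`. -/
theorem finite_chain_presented (n : ℕ) (hn : 0 < n) :
    qsmul (n - 1) (1 / (n : ℚ)) = qneg (1 / (n : ℚ)) ∧
    ∀ (A : Type) [MV A], ∀ y : A, MV.smul (n - 1) y = MV.neg y →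
      ∃! f : Fin (n + 1) → A,
        f ⟨1, by omega⟩ = y ∧
        f ⟨0, by omega⟩ = MV.zero ∧
        (∀ k : Fin (n + 1), f ⟨n - k.val, by omega⟩ = MV.neg (f k)) ∧
        (∀ k l : Fin (n + 1),
          f ⟨min (k.val + l.val) n, by omega⟩ = MV.oplus (f k) (f l)) := by
  refine ⟨?_, fun A _ y hy => ⟨fun k => MV.smul k y, ⟨MV.smul_one y, rfl, ?_, ?_⟩, ?_⟩⟩
  · rw [qsmul_eq_min (by positivity), Nat.cast_pred hn, min_eq_left, qneg]
    · field_simp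
    · have hn' : (1 : ℚ) ≤ n := by exact_mod_cast hn
      rw [mul_one_div, div_le_one (by positivity)]
      linarith
  · intro k
    simp only [MV.smul_eq_neg_smul_sub hn hy (n - k) (by omega), Nat.sub_sub_self k.is_le]
  · exact fun k l => MV.smul_min_add hn hy k l
  · rintro g ⟨hg1, hg0, -, hgadd⟩
    exact funext (MV.eq_smul_of_map_oplus hn hg1 hg0 hgadd)
end

section
/- Let A be an MV-algebra in which every element x satisfies ((n+1)x)² = 0 or (n+1)x = 1, with 0 ≠ 1 (i.e., A is a model of Loc¹_V). Then Rad(A) := {x : ((n+1)x)²=0} is the unique maximal ideal of A: every proper ideal of A is contained in Rad(A). -/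
/-- An ideal of an MV-algebra: contains `0`, downward closed, closed under `⊕`. -/
def MV.IsIdeal {A : Type*} [MV A] (I : Set A) : Prop :=
  MV.zero ∈ I ∧ (∀ x y : A, MV.le x y → y ∈ I → x ∈ I) ∧
    ∀ x ∈ I, ∀ y ∈ I, MV.oplus x y ∈ I

namespace MV

variable {A : Type*} [MV A]

theorem le_one (x : A) : le x one :=
  oplus_neg_zero (neg x)

theorem IsIdeal.smul_mem {I : Set A} (hI : IsIdeal I) {x : A} (hx : x ∈ I) :
    ∀ k : ℕ, smul k x ∈ I
  | 0 => hI.1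
  | k + 1 => hI.2.2 x hx _ (hI.smul_mem hx k)

theorem IsIdeal.eq_univ_of_one_mem {I : Set A} (hI : IsIdeal I) (h1 : one ∈ I) :
    I = Set.univ :=
  Set.eq_univ_of_forall fun y => hI.2.1 y one (le_one y) h1

end MV

theorem radical_unique_maximal_ideal_general {A : Type*} [MV A] (n : ℕ)
    (hloc : ∀ x : A,
      MV.odot (MV.smul (n + 1) x) (MV.smul (n + 1) x) = MV.zero ∨
        MV.smul (n + 1) x = MV.one) :
    ∀ I : Set A, MV.IsIdeal I → I ≠ Set.univ →
      I ⊆ {x : A | MV.odot (MV.smul (n + 1) x) (MV.smul (n + 1) x) = MV.zero} := by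
  intro I hI hproper x hx
  refine (hloc x).resolve_right fun hone => hproper (hI.eq_univ_of_one_mem ?_)
  exact hone ▸ hI.smul_mem hx (n + 1)

/-- If `A` is an MV-algebra with `0 ≠ 1` in which every `x` satisfies
`((n+1)x)² = 0` or `(n+1)x = 1`, and `Rad(A) = {x : ((n+1)x)² = 0}` is an ideal,
then `Rad(A)` is the unique maximal ideal: every proper ideal is contained in it. -/
theorem radical_unique_maximal_ideal {A : Type*} [MV A] (n : ℕ)
    (h01 : (MV.zero : A) ≠ MV.one)
    (hloc : ∀ x : A,
      MV.odot (MV.smul (n + 1) x) (MV.smul (n + 1) x) = MV.zero ∨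
        MV.smul (n + 1) x = MV.one)
    (hrad : MV.IsIdeal
      {x : A | MV.odot (MV.smul (n + 1) x) (MV.smul (n + 1) x) = MV.zero}) :
    ∀ I : Set A, MV.IsIdeal I → I ≠ Set.univ →
      I ⊆ {x : A | MV.odot (MV.smul (n + 1) x) (MV.smul (n + 1) x) = MV.zero} :=
  radical_unique_maximal_ideal_general n hloc
end

section
/- For any irrational ξ ∈ [0,1], the element ξ of the standard MV-algebra [0,1] is not definable by a geometric formula in the following concrete sense: there is no countable family of MV-terms tᵢ(x, y⃗ᵢ) such that for all a ∈ [0,1], (∃i ∃ y⃗ᵢ ∈ [0,1]^{kᵢ} with tᵢ(a, y⃗ᵢ) = 1) holds if and only if a = ξ. Key lemma: for any MV-term t in k+1 variables on [0,1], if the solution set {(a, y⃗) : t(a,y⃗) = 1} projects to a single point {a} on the first coordinate, then a is rational. -/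
/-!
`MVTerm.eval t` is piecewise affine with rational coefficients: every point lies in a polyhedron
cut out by finitely many rational affine inequalities on which `t.eval` agrees with a rational
affine function. If `t.eval v = 1` for some `v ∈ [0,1]ⁿ`, then the rational linear system
"in that polyhedron, in the cube, and on the hyperplane where the affine piece equals `1`" has the
real solution `v`, hence by Fourier–Motzkin elimination a rational solution `w`, and
`t.eval w = 1`. So a nonempty solution set projecting onto `{ξ}` forces `ξ = w 0 ∈ ℚ`.
-/

theorem Finite.exists_between_of_forall_le {α β K : Type*} [Finite α] [Finite β] [LinearOrder K]
    [Nonempty K] {lo : α → K} {up : β → K} (h : ∀ a b, lo a ≤ up b) :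
    ∃ y, (∀ a, lo a ≤ y) ∧ ∀ b, y ≤ up b := by
  rcases isEmpty_or_nonempty α with hα | hα
  · rcases isEmpty_or_nonempty β with hβ | hβ
    · exact ⟨Classical.arbitrary K, isEmptyElim, isEmptyElim⟩
    · obtain ⟨b₀, hb₀⟩ := Finite.exists_min up
      exact ⟨up b₀, isEmptyElim, hb₀⟩
  · obtain ⟨a₀, ha₀⟩ := Finite.exists_max lo
    exact ⟨lo a₀, ha₀, h a₀⟩

abbrev RatAffine (n : ℕ) : Type := (Fin n → ℚ) × ℚ

namespace RatAffine

variable {n : ℕ} {K : Type*} [Field K]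

def eval (f : RatAffine n) (x : Fin n → K) : K := ∑ i, (f.1 i : K) * x i + f.2

def const (c : ℚ) : RatAffine n := (0, c)

def coord (i : Fin n) : RatAffine n := (Pi.single i 1, 0)

@[simp] theorem eval_const (c : ℚ) (x : Fin n → K) : (const c : RatAffine n).eval x = c := by
  simp [eval, const]

@[simp] theorem eval_coord (i : Fin n) (x : Fin n → K) : (coord i).eval x = x i := by
  simp [eval, coord, Pi.single_apply, apply_ite (Rat.cast : ℚ → K), ite_mul]

def init (f : RatAffine (n + 1)) : RatAffine n := (Fin.init f.1, f.2)

def lastCoeff (f : RatAffine (n + 1)) : ℚ := f.1 (Fin.last n)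

theorem eval_snoc (f : RatAffine (n + 1)) (z : Fin n → K) (y : K) :
    f.eval (Fin.snoc z y : Fin (n + 1) → K) = (init f).eval z + lastCoeff f * y := by
  simp only [eval, init, lastCoeff, Fin.sum_univ_castSucc, Fin.snoc_castSucc, Fin.snoc_last,
    Fin.init]
  ring

section CharZero

variable [CharZero K]

@[simp] theorem eval_add (f g : RatAffine n) (x : Fin n → K) :
    (f + g).eval x = f.eval x + g.eval x := by
  simp only [eval, Prod.fst_add, Prod.snd_add, Pi.add_apply, Rat.cast_add, add_mul,
    Finset.sum_add_distrib]
  ring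

@[simp] theorem eval_smul (c : ℚ) (f : RatAffine n) (x : Fin n → K) :
    (c • f).eval x = c * f.eval x := by
  simp only [eval, Prod.smul_fst, Prod.smul_snd, Pi.smul_apply, smul_eq_mul, Rat.cast_mul,
    mul_add, Finset.mul_sum, mul_assoc]

@[simp] theorem eval_neg (f : RatAffine n) (x : Fin n → K) : (-f).eval x = -f.eval x := by
  simpa using eval_smul (-1) f x

@[simp] theorem eval_sub (f g : RatAffine n) (x : Fin n → K) :
    (f - g).eval x = f.eval x - g.eval x := by
  simp [sub_eq_add_neg]

theorem eval_ratCast (f : RatAffine n) (w : Fin n → ℚ) :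
    f.eval (fun i => (w i : K)) = ((f.eval w : ℚ) : K) := by
  simp [eval]

end CharZero

section FourierMotzkin

variable {ι : Type*} (S : ι → RatAffine (n + 1))

def elimLast :
    {i // lastCoeff (S i) = 0} ⊕ ({i // lastCoeff (S i) < 0} × {j // 0 < lastCoeff (S j)}) →
      RatAffine n
  | .inl i => init (S i)
  | .inr (i, j) => lastCoeff (S j) • init (S i) - lastCoeff (S i) • init (S j)

variable {S} [LinearOrder K] [IsStrictOrderedRing K]

theorem eval_elimLast_nonpos {x : Fin (n + 1) → K} (hx : ∀ i, (S i).eval x ≤ 0) :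
    ∀ e, (elimLast S e).eval (Fin.init x) ≤ 0 := by
  have hS i : (init (S i)).eval (Fin.init x) + lastCoeff (S i) * x (Fin.last n) ≤ 0 := by
    rw [← eval_snoc, Fin.snoc_init_self]
    exact hx i
  rintro (⟨i, hi⟩ | ⟨⟨i, hi⟩, ⟨j, hj⟩⟩)
  · simpa [elimLast, hi] using hS i
  · have hi' : (lastCoeff (S i) : K) < 0 := by exact_mod_cast hi
    have hj' : (0 : K) < lastCoeff (S j) := by exact_mod_cast hj
    simp only [elimLast, eval_sub, eval_smul]
    nlinarith [mul_nonpos_of_nonneg_of_nonpos hj'.le (hS i),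
      mul_nonpos_of_nonneg_of_nonpos (neg_nonneg.2 hi'.le) (hS j)]

theorem exists_snoc_eval_nonpos [Finite ι] {z : Fin n → K}
    (hz : ∀ e, (elimLast S e).eval z ≤ 0) :
    ∃ y, ∀ i, (S i).eval (Fin.snoc z y : Fin (n + 1) → K) ≤ 0 := by
  obtain ⟨y, hlo, hup⟩ := Finite.exists_between_of_forall_le
    (lo := fun i : {i // lastCoeff (S i) < 0} => (init (S i)).eval z / -lastCoeff (S i))
    (up := fun j : {j // 0 < lastCoeff (S j)} => -(init (S j)).eval z / lastCoeff (S j))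
    fun ⟨i, hi⟩ ⟨j, hj⟩ => by
      have hi' : (0 : K) < -lastCoeff (S i) := by exact_mod_cast neg_pos.2 hi
      have hj' : (0 : K) < lastCoeff (S j) := by exact_mod_cast hj
      have := hz (.inr (⟨i, hi⟩, ⟨j, hj⟩))
      simp only [elimLast, eval_sub, eval_smul] at this
      rw [div_le_div_iff₀ hi' hj']
      linarith
  refine ⟨y, fun i => ?_⟩
  rw [eval_snoc]
  rcases lt_trichotomy (lastCoeff (S i)) 0 with hi | hi | hi
  · have hi' : (0 : K) < -lastCoeff (S i) := by exact_mod_cast neg_pos.2 hi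
    have := (div_le_iff₀ hi').1 (hlo ⟨i, hi⟩)
    linarith
  · rw [hi, Rat.cast_zero, zero_mul, add_zero]
    exact hz (.inl ⟨i, hi⟩)
  · have hi' : (0 : K) < lastCoeff (S i) := by exact_mod_cast hi
    have := (le_div_iff₀ hi').1 (hup ⟨i, hi⟩)
    linarith

end FourierMotzkin

theorem exists_forall_eval_nonpos_of_exists [LinearOrder K] [IsStrictOrderedRing K]
    {L : Type*} [Field L] [LinearOrder L] [IsStrictOrderedRing L] {ι : Type*} [Finite ι]
    (S : ι → RatAffine n) (h : ∃ x : Fin n → L, ∀ i, (S i).eval x ≤ 0) :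
    ∃ x : Fin n → K, ∀ i, (S i).eval x ≤ 0 := by
  induction n generalizing ι with
  | zero =>
    obtain ⟨x, hx⟩ := h
    exact ⟨0, fun i => by simpa [eval] using hx i⟩
  | succ n ih =>
    obtain ⟨x, hx⟩ := h
    obtain ⟨z, hz⟩ := ih (elimLast S) ⟨Fin.init x, eval_elimLast_nonpos hx⟩
    obtain ⟨y, hy⟩ := exists_snoc_eval_nonpos hz
    exact ⟨_, hy⟩

end RatAffine

open RatAffine

def IsRatPiecewiseAffine {n : ℕ} (F : (Fin n → ℝ) → ℝ) : Prop :=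
  ∀ x : Fin n → ℝ, ∃ (C : Finset (RatAffine n)) (f : RatAffine n),
    (∀ g ∈ C, g.eval x ≤ 0) ∧ ∀ y, (∀ g ∈ C, g.eval y ≤ 0) → F y = f.eval y

namespace IsRatPiecewiseAffine

variable {n : ℕ} {F G : (Fin n → ℝ) → ℝ}

theorem ratAffine (f : RatAffine n) : IsRatPiecewiseAffine f.eval :=
  fun _ => ⟨∅, f, by simp, fun _ _ => rfl⟩

theorem congr (hF : IsRatPiecewiseAffine F) (h : ∀ x, F x = G x) : IsRatPiecewiseAffine G :=
  funext h ▸ hF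

theorem one_sub (hF : IsRatPiecewiseAffine F) : IsRatPiecewiseAffine (fun x => 1 - F x) := by
  refine fun x => ?_
  obtain ⟨C, f, hxC, hCf⟩ := hF x
  exact ⟨C, const 1 - f, hxC, fun y hy => by simp [hCf y hy]⟩

theorem min_add_one (hF : IsRatPiecewiseAffine F) (hG : IsRatPiecewiseAffine G) :
    IsRatPiecewiseAffine (fun x => min (F x + G x) 1) := by
  refine fun x => ?_
  obtain ⟨C, f, hxC, hCf⟩ := hF x
  obtain ⟨D, g, hxD, hDg⟩ := hG x
  have hsum y (hy : ∀ h ∈ C ∪ D, h.eval y ≤ 0) : F y + G y = (f + g).eval y := by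
    rw [Finset.forall_mem_union] at hy
    rw [eval_add, hCf y hy.1, hDg y hy.2]
  have hxCD : ∀ h ∈ C ∪ D, h.eval x ≤ 0 := Finset.forall_mem_union.2 ⟨hxC, hxD⟩
  rcases le_total (F x + G x) 1 with hle | hge
  · refine ⟨insert (f + g - const 1) (C ∪ D), f + g, ?_, fun y hy => ?_⟩
    · rw [Finset.forall_mem_insert, eval_sub, eval_const, Rat.cast_one, sub_nonpos,
        ← hsum x hxCD]
      exact ⟨hle, hxCD⟩
    · obtain ⟨hy₁, hyCD⟩ := Finset.forall_mem_insert _ _ _ |>.1 hy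
      rw [eval_sub, eval_const, Rat.cast_one, sub_nonpos, ← hsum y hyCD] at hy₁
      exact (min_eq_left hy₁).trans (hsum y hyCD)
  · refine ⟨insert (const 1 - (f + g)) (C ∪ D), const 1, ?_, fun y hy => ?_⟩
    · rw [Finset.forall_mem_insert, eval_sub, eval_const, Rat.cast_one, sub_nonpos,
        ← hsum x hxCD]
      exact ⟨hge, hxCD⟩
    · obtain ⟨hy₁, hyCD⟩ := Finset.forall_mem_insert _ _ _ |>.1 hy
      rw [eval_sub, eval_const, Rat.cast_one, sub_nonpos, ← hsum y hyCD] at hy₁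
      rw [eval_const, Rat.cast_one]
      exact min_eq_right hy₁

end IsRatPiecewiseAffine

namespace MVTerm

theorem isRatPiecewiseAffine_eval {n : ℕ} (t : MVTerm n) : IsRatPiecewiseAffine t.eval := by
  induction t with
  | var i => exact (IsRatPiecewiseAffine.ratAffine (coord i)).congr fun x => by simp [eval]
  | zero => exact (IsRatPiecewiseAffine.ratAffine (const 0)).congr fun x => by simp [eval]
  | neg t ht => exact ht.one_sub.congr fun x => by rw [eval]
  | oplus t s ht hs => exact (ht.min_add_one hs).congr fun x => by rw [eval]

theorem exists_ratCast_eval_eq_one {n : ℕ} (t : MVTerm n) {v : Fin n → ℝ}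
    (hv : ∀ j, v j ∈ Set.Icc (0 : ℝ) 1) (h1 : t.eval v = 1) :
    ∃ w : Fin n → ℚ, (∀ j, (w j : ℝ) ∈ Set.Icc (0 : ℝ) 1) ∧
      t.eval (fun j => (w j : ℝ)) = 1 := by
  obtain ⟨C, f, hvC, hCf⟩ := t.isRatPiecewiseAffine_eval v
  let S : Finset (RatAffine n) := C ∪ {f - const 1, const 1 - f} ∪
    Finset.univ.image (fun j => coord j - const 1) ∪ Finset.univ.image (fun j => -coord j)
  have forall_mem_S (x : Fin n → ℝ) : (∀ g ∈ S, g.eval x ≤ 0) ↔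
      (∀ g ∈ C, g.eval x ≤ 0) ∧ f.eval x = 1 ∧ ∀ j, x j ∈ Set.Icc (0 : ℝ) 1 := by
    simp only [S, Finset.forall_mem_union, Finset.forall_mem_insert, Finset.mem_singleton,
      forall_eq, Finset.forall_mem_image, Finset.mem_univ, true_implies, eval_sub, eval_neg,
      eval_const, eval_coord, Rat.cast_one, sub_nonpos, neg_nonpos, Set.mem_Icc, forall_and]
    rw [le_antisymm_iff]
    tauto
  obtain ⟨w, hw⟩ := exists_forall_eval_nonpos_of_exists (K := ℚ) ((↑) : S → RatAffine n)
    ⟨v, fun g => (forall_mem_S v).2 ⟨hvC, hCf v hvC ▸ h1, hv⟩ g g.2⟩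
  obtain ⟨hwC, hwf, hw01⟩ := (forall_mem_S _).1 fun g hg => by
    rw [eval_ratCast]
    exact_mod_cast hw ⟨g, hg⟩
  exact ⟨w, hw01, (hCf _ hwC).trans hwf⟩

theorem mem_range_ratCast_of_forall_eval_eq_one {k : ℕ} (t : MVTerm (k + 1)) {a : ℝ}
    (hne : ∃ v : Fin (k + 1) → ℝ, (∀ j, v j ∈ Set.Icc (0 : ℝ) 1) ∧ t.eval v = 1)
    (hproj : ∀ v : Fin (k + 1) → ℝ, (∀ j, v j ∈ Set.Icc (0 : ℝ) 1) → t.eval v = 1 →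
      v 0 = a) :
    a ∈ Set.range ((↑) : ℚ → ℝ) := by
  obtain ⟨v, hv, hv1⟩ := hne
  obtain ⟨w, hw, hw1⟩ := t.exists_ratCast_eval_eq_one hv hv1
  exact ⟨w 0, hproj _ hw hw1⟩

end MVTerm

/-- For any irrational `ξ ∈ [0,1]`, there is no countable family of MV-terms
`tᵢ(x, y⃗ᵢ)` such that for all `a ∈ [0,1]`, the condition
`∃ i ∃ y⃗ᵢ ∈ [0,1]^{kᵢ}, tᵢ(a, y⃗ᵢ) = 1` holds if and only if `a = ξ`. -/
theorem irrational_not_geometrically_definable (ξ : ℝ) (hξ : ξ ∈ Set.Icc (0 : ℝ) 1)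
    (hirr : Irrational ξ) :
    ¬ ∃ (k : ℕ → ℕ) (t : ∀ i : ℕ, MVTerm (k i + 1)),
      ∀ a ∈ Set.Icc (0 : ℝ) 1,
        ((∃ (i : ℕ) (v : Fin (k i + 1) → ℝ),
            (∀ j, v j ∈ Set.Icc (0 : ℝ) 1) ∧ v 0 = a ∧ (t i).eval v = 1) ↔ a = ξ) := by
  rintro ⟨k, t, h⟩
  obtain ⟨i, v, hv, -, hv1⟩ := (h ξ hξ).2 rfl
  exact hirr <| (t i).mem_range_ratCast_of_forall_eval_eq_one ⟨v, hv, hv1⟩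
    fun w hw hw1 => (h (w 0) (hw 0)).1 ⟨i, w, hw, rfl, hw1⟩
end
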